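/- For any measurable function f on ℝ², the classical one-dimensional decreasing rearrangement of f₂* (as a function on ℝ₊², with respect to two-dimensional Lebesgue measure) equals the classical decreasing rearrangement f* of f: (f₂*)* = f*. -/

import Mathlib

open MeasureTheory Set ENNReal Filter

/-- Classical decreasing rearrangement of an `ℝ≥0∞`-valued function. -/
noncomputable def decRe {α : Type*} [MeasurableSpace α] (μ : Measure α)
    (g : α → ℝ≥0∞) (t : ℝ) : ℝ≥0∞ :=
  sInf {l : ℝ≥0∞ | μ {x | l < g x} ≤ ENNReal.ofReal t}

/-- `φ_E(x)`: the measure of the `x`-section of `E`. -/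
noncomputable def phiSec (E : Set (ℝ × ℝ)) (x : ℝ) : ℝ≥0∞ :=
  volume {y : ℝ | (x, y) ∈ E}

/-- The two-dimensional decreasing rearrangement `E*` of a set `E ⊆ ℝ²`. -/
def starSet (E : Set (ℝ × ℝ)) : Set (ℝ × ℝ) :=
  {p | 0 < p.1 ∧ 0 < p.2 ∧ ENNReal.ofReal p.2 < decRe volume (phiSec E) p.1}

/-- The two-dimensional decreasing rearrangement `f₂*` of a function (layer-cake formula). -/
noncomputable def rearr2 (f : ℝ × ℝ → ℝ) (x : ℝ × ℝ) : ℝ≥0∞ :=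
  ∫⁻ t in Set.Ioi (0 : ℝ), (starSet {p | t < |f p|}).indicator (fun _ => (1 : ℝ≥0∞)) x

/-- The open positive quadrant `ℝ₊²`. -/
def Quad : Set (ℝ × ℝ) := Set.Ioi 0 ×ˢ Set.Ioi 0

/-!
Both `f₂*` and `|f|` are layer-cake functions `x ↦ |{t > 0 | x ∈ E t}|` of decreasing families of
sets: of `t ↦ {|f| > t}*` and of `t ↦ {|f| > t}`. The distribution function of such a function is
determined by the measures of the layers, since `{x | l < ·}` is the increasing union of the layers
at rational levels `q > l`. The layers have equal measures, `|E*| = |E|`: by Fubini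
`|E*| = ∫₀^∞ (φ_E)*` and `|E| = ∫ φ_E`, and these agree because the one-dimensional rearrangement
is equimeasurable. Hence `f₂*` and `|f|` are equimeasurable, and so have the same rearrangement.
-/

noncomputable def layerCake {β : Type*} (E : ℝ → Set β) (x : β) : ℝ≥0∞ :=
  ∫⁻ t in Ioi (0 : ℝ), (E t).indicator (fun _ => (1 : ℝ≥0∞)) x

lemma volume_setOf_ofReal_lt_inter_Ioi (c : ℝ≥0∞) :
    volume ({t : ℝ | ENNReal.ofReal t < c} ∩ Ioi 0) = c := by
  rcases eq_or_ne c ⊤ with rfl | hc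
  · simp [ENNReal.ofReal_lt_top, Real.volume_Ioi]
  · have : {t : ℝ | ENNReal.ofReal t < c} ∩ Ioi 0 = Ioo 0 c.toReal := by
      ext t
      simp only [mem_inter_iff, mem_ofPred_eq, mem_Ioi, mem_Ioo]
      exact ⟨fun ⟨h, ht⟩ => ⟨ht, (ofReal_lt_iff_lt_toReal ht.le hc).mp h⟩,
        fun ⟨ht, h⟩ => ⟨(ofReal_lt_iff_lt_toReal ht.le hc).mpr h, ht⟩⟩
    rw [this, Real.volume_Ioo, sub_zero, ofReal_toReal hc]

section LayerCake

variable {β : Type*}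

lemma layerCake_eq_volume {E : ℝ → Set β} {x : β} (hE : MeasurableSet {t | x ∈ E t}) :
    layerCake E x = volume ({t | x ∈ E t} ∩ Ioi 0) := by
  rw [← Measure.restrict_apply hE, ← lintegral_indicator_one hE]
  rfl

lemma layerCake_setOf_lt (h : β → ℝ) (x : β) :
    layerCake (fun t => {y | t < h y}) x = ENNReal.ofReal (h x) := by
  rw [layerCake_eq_volume (E := fun t => {y | t < h y}) measurableSet_Iio]
  change volume (Iio (h x) ∩ Ioi 0) = _
  rw [Iio_inter_Ioi, Real.volume_Ioo, sub_zero]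

lemma layerCake_setOf_ofReal_lt (h : β → ℝ≥0∞) (x : β) :
    layerCake (fun t => {y | ENNReal.ofReal t < h y}) x = h x := by
  rw [layerCake_eq_volume (E := fun t => {y | ENNReal.ofReal t < h y})
    (measurableSet_lt measurable_ofReal measurable_const)]
  exact volume_setOf_ofReal_lt_inter_Ioi (h x)

lemma ofReal_le_layerCake {E : ℝ → Set β} (hE : Antitone E) {x : β} {s : ℝ} (hx : x ∈ E s) :
    ENNReal.ofReal s ≤ layerCake E x :=
  calc ENNReal.ofReal s = ∫⁻ _ in Ioo 0 s, 1 := by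
        rw [setLIntegral_one, Real.volume_Ioo, sub_zero]
    _ ≤ ∫⁻ t in Ioo 0 s, (E t).indicator (fun _ => 1) x :=
        setLIntegral_mono' measurableSet_Ioo fun t ht =>
          (indicator_of_mem (hE ht.2.le hx) (fun _ => (1 : ℝ≥0∞))).ge
    _ ≤ layerCake E x := lintegral_mono_set Ioo_subset_Ioi_self

lemma layerCake_le {E : ℝ → Set β} {x : β} {l : ℝ≥0∞}
    (h : ∀ t, 0 < t → x ∈ E t → ENNReal.ofReal t ≤ l) : layerCake E x ≤ l := by
  rcases eq_or_ne l ⊤ with rfl | hl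
  · exact le_top
  calc layerCake E x ≤ ∫⁻ t in Ioi 0, (Iic l.toReal).indicator 1 t := by
        refine setLIntegral_mono' measurableSet_Ioi fun t ht => ?_
        by_cases hx : x ∈ E t
        · have : t ≤ l.toReal := (ofReal_le_iff_le_toReal hl).mp (h t ht hx)
          rw [indicator_of_mem hx, indicator_of_mem (mem_Iic.mpr this)]
          rfl
        · rw [indicator_of_notMem hx]
          exact zero_le
    _ = l := by
        rw [lintegral_indicator_one measurableSet_Iic, Measure.restrict_apply measurableSet_Iic,
          Iic_inter_Ioi, Real.volume_Ioc, sub_zero, ofReal_toReal hl]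

lemma lt_layerCake_iff {E : ℝ → Set β} (hE : Antitone E) {x : β} {l : ℝ≥0∞} :
    l < layerCake E x ↔ ∃ q : ℚ, 0 < (q : ℝ) ∧ l < ENNReal.ofReal q ∧ x ∈ E q := by
  refine ⟨fun hl => ?_, fun ⟨q, _, hlq, hx⟩ => hlq.trans_le (ofReal_le_layerCake hE hx)⟩
  by_contra! hno
  refine hl.not_ge (layerCake_le fun t ht hx => ?_)
  by_contra! hlt
  obtain ⟨r, hr, hlr, hrt⟩ := ENNReal.lt_iff_exists_real_btwn.mp hlt
  obtain ⟨q, hrq, hqt⟩ := exists_rat_btwn ((ofReal_lt_ofReal_iff ht).mp hrt)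
  exact hno q (hr.trans_lt hrq) (hlr.trans_le (ofReal_le_ofReal hrq.le)) (hE hqt.le hx)

variable [MeasurableSpace β]

lemma lintegral_layerCake (μ : Measure β) [SFinite μ] {E : ℝ → Set β}
    (hE : MeasurableSet {p : β × ℝ | p.1 ∈ E p.2}) :
    ∫⁻ x, layerCake E x ∂μ = ∫⁻ t in Ioi 0, μ (E t) := by
  unfold layerCake
  rw [lintegral_lintegral_swap (f := fun x t => (E t).indicator (fun _ => (1 : ℝ≥0∞)) x)
    (measurable_const.indicator hE).aemeasurable]
  exact lintegral_congr fun t => lintegral_indicator_one (measurable_prodMk_right hE)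

lemma lintegral_eq_lintegral_meas_ofReal_lt (μ : Measure β) [SFinite μ] {h : β → ℝ≥0∞}
    (hh : Measurable h) :
    ∫⁻ x, h x ∂μ = ∫⁻ t in Ioi 0, μ {x | ENNReal.ofReal t < h x} := by
  calc ∫⁻ x, h x ∂μ = ∫⁻ x, layerCake (fun t => {y | ENNReal.ofReal t < h y}) x ∂μ := by
        simp only [layerCake_setOf_ofReal_lt]
    _ = _ := lintegral_layerCake μ
        (measurableSet_lt (measurable_ofReal.comp measurable_snd) (hh.comp measurable_fst))

lemma measure_lt_layerCake {μ : Measure β} {E : ℝ → Set β} (hE : Antitone E) (l : ℝ≥0∞) :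
    μ {x | l < layerCake E x} = ⨆ q ∈ {q : ℚ | 0 < (q : ℝ) ∧ l < ENNReal.ofReal q}, μ (E q) := by
  have hset : {x | l < layerCake E x} =
      ⋃ q ∈ {q : ℚ | 0 < (q : ℝ) ∧ l < ENNReal.ofReal q}, E q := by
    ext x
    simp only [mem_ofPred_eq, mem_iUnion, exists_prop, lt_layerCake_iff hE, and_assoc]
  rw [hset, measure_biUnion_eq_iSup (Set.to_countable _)]
  intro q hq q' hq'
  exact ⟨min q q', min_rec' _ hq hq', hE (by exact_mod_cast min_le_left q q'),
    hE (by exact_mod_cast min_le_right q q')⟩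

lemma measure_lt_layerCake_eq {γ : Type*} [MeasurableSpace γ] {μ : Measure β} {ν : Measure γ}
    {E : ℝ → Set β} {F : ℝ → Set γ} (hE : Antitone E) (hF : Antitone F)
    (hEF : ∀ t, 0 < t → μ (E t) = ν (F t)) (l : ℝ≥0∞) :
    μ {x | l < layerCake E x} = ν {y | l < layerCake F y} := by
  rw [measure_lt_layerCake hE, measure_lt_layerCake hF]
  exact iSup_congr fun q => iSup_congr fun hq => hEF q hq.1

end LayerCake

section DecreasingRearrangement

variable {α : Type*} [MeasurableSpace α] (μ : Measure α) (g : α → ℝ≥0∞)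

lemma measure_decRe_lt_le (t : ℝ) : μ {x | decRe μ g t < g x} ≤ ENNReal.ofReal t := by
  obtain ⟨u, hu_anti, hu_lim, hu_mem⟩ :=
    exists_seq_tendsto_sInf (S := {l : ℝ≥0∞ | μ {x | l < g x} ≤ ENNReal.ofReal t})
      ⟨⊤, by simp⟩ (OrderBot.bddBelow _)
  have hunion : {x | decRe μ g t < g x} = ⋃ n, {x | u n < g x} := by
    ext x
    simp only [mem_ofPred_eq, mem_iUnion]
    exact ⟨fun hx => (hu_lim.eventually_lt_const hx).exists,
      fun ⟨n, hn⟩ => (sInf_le (hu_mem n)).trans_lt hn⟩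
  rw [hunion, Monotone.measure_iUnion (s := fun n => {x | u n < g x})
    fun m n hmn x hx => (hu_anti hmn).trans_lt hx]
  exact iSup_le hu_mem

variable {μ g}

lemma decRe_le_iff {t : ℝ} {l : ℝ≥0∞} :
    decRe μ g t ≤ l ↔ μ {x | l < g x} ≤ ENNReal.ofReal t :=
  ⟨fun h => (measure_mono fun _ hx => h.trans_lt hx).trans (measure_decRe_lt_le μ g t),
    fun h => sInf_le h⟩

lemma lt_decRe_iff {t : ℝ} {l : ℝ≥0∞} :
    l < decRe μ g t ↔ ENNReal.ofReal t < μ {x | l < g x} := by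
  simp only [← not_le, decRe_le_iff]

variable (μ g)

lemma volume_setOf_lt_decRe_inter_Ioi (l : ℝ≥0∞) :
    volume ({t : ℝ | l < decRe μ g t} ∩ Ioi 0) = μ {x | l < g x} := by
  simp only [lt_decRe_iff, volume_setOf_ofReal_lt_inter_Ioi]

lemma decRe_antitone : Antitone (decRe μ g) :=
  fun _ _ h => sInf_le_sInf fun _ hl => hl.trans (ofReal_le_ofReal h)

variable {μ g}

lemma decRe_mono {g' : α → ℝ≥0∞} (h : ∀ x, g x ≤ g' x) (t : ℝ) : decRe μ g t ≤ decRe μ g' t :=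
  sInf_le_sInf fun _ hl => (measure_mono fun x hx => hx.trans_le (h x)).trans hl

lemma decRe_congr {β : Type*} [MeasurableSpace β] {ν : Measure β} {h : β → ℝ≥0∞}
    (hgh : ∀ l, μ {x | l < g x} = ν {y | l < h y}) : decRe μ g = decRe ν h := by
  funext t
  simp only [decRe, hgh]

lemma setLIntegral_decRe [SFinite μ] (hg : Measurable g) :
    ∫⁻ t in Ioi 0, decRe μ g t = ∫⁻ x, g x ∂μ := by
  rw [lintegral_eq_lintegral_meas_ofReal_lt _ (decRe_antitone μ g).measurable,
    lintegral_eq_lintegral_meas_ofReal_lt μ hg]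
  refine lintegral_congr fun t => ?_
  rw [Measure.restrict_apply' measurableSet_Ioi]
  exact volume_setOf_lt_decRe_inter_Ioi μ g _

end DecreasingRearrangement

lemma measurable_phiSec {E : Set (ℝ × ℝ)} (hE : MeasurableSet E) : Measurable (phiSec E) :=
  measurable_measure_prodMk_left hE

lemma lintegral_phiSec {E : Set (ℝ × ℝ)} (hE : MeasurableSet E) :
    ∫⁻ x, phiSec E x = volume E := by
  rw [Measure.volume_eq_prod, Measure.prod_apply hE]
  rfl

lemma measurableSet_starSet (E : Set (ℝ × ℝ)) : MeasurableSet (starSet E) :=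
  (measurableSet_lt measurable_const measurable_fst).inter
    ((measurableSet_lt measurable_const measurable_snd).inter
      (measurableSet_lt (measurable_ofReal.comp measurable_snd)
        ((decRe_antitone _ _).measurable.comp measurable_fst)))

lemma volume_prodMk_preimage_starSet (E : Set (ℝ × ℝ)) (x : ℝ) :
    volume (Prod.mk x ⁻¹' starSet E) = (Ioi 0).indicator (decRe volume (phiSec E)) x := by
  by_cases hx : 0 < x
  · have : Prod.mk x ⁻¹' starSet E =
        {y | ENNReal.ofReal y < decRe volume (phiSec E) x} ∩ Ioi 0 := by
      ext y
      simp only [starSet, mem_preimage, mem_ofPred_eq, mem_inter_iff, mem_Ioi]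
      tauto
    rw [this, volume_setOf_ofReal_lt_inter_Ioi, indicator_of_mem (mem_Ioi.mpr hx)]
  · have : Prod.mk x ⁻¹' starSet E = ∅ := eq_empty_of_forall_notMem fun _ hy => hx hy.1
    rw [this, measure_empty, indicator_of_notMem (by simpa using hx)]

lemma volume_starSet {E : Set (ℝ × ℝ)} (hE : MeasurableSet E) :
    volume (starSet E) = volume E :=
  calc volume (starSet E) = ∫⁻ x, (Ioi 0).indicator (decRe volume (phiSec E)) x := by
        rw [Measure.volume_eq_prod, Measure.prod_apply (measurableSet_starSet E)]
        exact lintegral_congr (volume_prodMk_preimage_starSet E)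
    _ = ∫⁻ x in Ioi 0, decRe volume (phiSec E) x := lintegral_indicator measurableSet_Ioi _
    _ = ∫⁻ x, phiSec E x := setLIntegral_decRe (measurable_phiSec hE)
    _ = volume E := lintegral_phiSec hE

lemma starSet_mono {E F : Set (ℝ × ℝ)} (h : E ⊆ F) : starSet E ⊆ starSet F := by
  rintro p ⟨hp₁, hp₂, hp⟩
  refine ⟨hp₁, hp₂, hp.trans_le ?_⟩
  exact decRe_mono (fun x => show phiSec E x ≤ phiSec F x from measure_mono fun _ hy => h hy) p.1

theorem stmt13 (f : ℝ × ℝ → ℝ) (hf : Measurable f) :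
    ∀ t : ℝ, 0 < t →
      decRe volume (rearr2 f) t
        = decRe volume (fun x => ENNReal.ofReal |f x|) t := by
  intro t _
  have hlevels : Antitone fun s : ℝ => {p : ℝ × ℝ | s < |f p|} :=
    fun _ _ hss' _ hp => hss'.trans_lt hp
  have habs : (fun x => ENNReal.ofReal |f x|) = layerCake fun s => {p | s < |f p|} :=
    funext fun x => (layerCake_setOf_lt (fun p => |f p|) x).symm
  rw [habs]
  refine congrFun (decRe_congr fun l => ?_) t
  exact measure_lt_layerCake_eq (fun _ _ h => starSet_mono (hlevels h)) hlevels
    (fun s _ => volume_starSet (measurableSet_lt measurable_const hf.abs)) l
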